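/- Let K be an inductive amalgamation class, let λ be an infinite cardinal, and let U and V be λ-rich models of K with |U| = |V| = λ. Then every morphism f : U → V with |f| < λ can be extended to an isomorphism between U and V. In particular, in each connected component of K there is at most one rich model of a given cardinality, up to isomorphism. -/

import Mathlib

namespace Amalg

open FirstOrder FirstOrder.Language Set Cardinal

universe u

/-- A "model": an `L`-structure whose carrier is a subset of the fixed universe of points `W`. -/
structure Mdl (L : FirstOrder.Language.{u, u}) (W : Type u) where
  s : Set W
  str : L.Structure ↥s

attribute [instance] Mdl.str

variable {L : FirstOrder.Language.{u, u}} {W : Type u}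

/-- The graph of the identity map on a set `s`. -/
def idGraph (s : Set W) : Set (W × W) := {p | p.1 ∈ s ∧ p.1 = p.2}

/-- Composition of (graphs of) partial maps. -/
def relComp (F G : Set (W × W)) : Set (W × W) := {p | ∃ b, (p.1, b) ∈ F ∧ (b, p.2) ∈ G}

/-- The graph of the inverse of a partial map. -/
def swapGraph (G : Set (W × W)) : Set (W × W) := {p | (p.2, p.1) ∈ G}

/-- The graph `G` is a map from (a subset of) `M` to `N`. -/
def inCarriers (M N : Mdl L W) (G : Set (W × W)) : Prop :=
  ∀ p ∈ G, p.1 ∈ M.s ∧ p.2 ∈ N.s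

/-- `G` is (the graph of) a partial embedding from `M` to `N`: it preserves all
quantifier-free formulas in both directions. -/
def IsPartialEmbedding (M N : Mdl L W) (G : Set (W × W)) : Prop :=
  inCarriers M N G ∧
    ∀ (n : ℕ) (φ : L.Formula (Fin n)), φ.IsQF →
      ∀ (x : Fin n → ↥M.s) (y : Fin n → ↥N.s),
        (∀ i, ((x i : W), (y i : W)) ∈ G) → (φ.Realize x ↔ φ.Realize y)

/-- `G` is (the graph of) an elementary map from `M` to `N`: it preserves all
first-order formulas in both directions. -/
def IsElemMap (M N : Mdl L W) (G : Set (W × W)) : Prop :=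
  inCarriers M N G ∧
    ∀ (n : ℕ) (φ : L.Formula (Fin n)) (x : Fin n → ↥M.s) (y : Fin n → ↥N.s),
      (∀ i, ((x i : W), (y i : W)) ∈ G) → (φ.Realize x ↔ φ.Realize y)

/-- A category of infinite `L`-structures and partial embeddings between them, satisfying
axioms K0, K1, K2. -/
structure CatC (L : FirstOrder.Language.{u, u}) (W : Type u) where
  IsMdl : Mdl L W → Prop
  IsMor : Mdl L W → Mdl L W → Set (W × W) → Prop
  infinite : ∀ M, IsMdl M → M.s.Infinite
  mor_src : ∀ M N G, IsMor M N G → IsMdl M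
  mor_tgt : ∀ M N G, IsMor M N G → IsMdl N
  mor_pe : ∀ M N G, IsMor M N G → IsPartialEmbedding M N G
  id_mor : ∀ M, IsMdl M → IsMor M M (idGraph M.s)
  comp_mor : ∀ M N P F G, IsMor M N F → IsMor N P G → IsMor M P (relComp F G)
  k0 : ∀ M N : Mdl L W, IsMdl M → (↥M.s ≅[L] ↥N.s) → IsMdl N
  k1 : ∀ M N G, IsMdl M → IsMdl N → IsElemMap M N G → IsMor M N G
  k2 : ∀ M N G, IsMor M N G → IsMor N M (swapGraph G)

/-- `M` is a strong submodel of `N`: `M ⊆ N` and the identity on `M` is a morphism. -/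
def Le (IsMor : Mdl L W → Mdl L W → Set (W × W) → Prop) (M N : Mdl L W) : Prop :=
  M.s ⊆ N.s ∧ IsMor M N (idGraph M.s)

/-- `G` is a strong embedding of `M` into `N`: a total morphism. -/
def StrongEmb (IsMor : Mdl L W → Mdl L W → Set (W × W) → Prop)
    (M N : Mdl L W) (G : Set (W × W)) : Prop :=
  IsMor M N G ∧ ∀ a ∈ M.s, ∃ b, (a, b) ∈ G

/-- A category as above additionally satisfying axiom R (restrictions of morphisms
are morphisms). -/
structure CatR (L : FirstOrder.Language.{u, u}) (W : Type u) extends CatC L W where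
  restr : ∀ M N F G, IsMor M N G → F ⊆ G → IsMor M N F

/-- An inductive amalgamation class: axioms K0, K1, K2, R, Ap and In. -/
structure IAC (L : FirstOrder.Language.{u, u}) (W : Type u) extends CatR L W where
  ap : ∀ M N F, IsMor M N F →
    ∃ (N' : Mdl L W) (H : Set (W × W)), Le IsMor N N' ∧ F ⊆ H ∧ StrongEmb IsMor M N' H
  ind : ∀ (ι : Type u) [LinearOrder ι] [Nonempty ι] (Ms : ι → Mdl L W),
    (∀ i j, i ≤ j → Le IsMor (Ms i) (Ms j)) →
    ∃ Mu : Mdl L W, Mu.s = ⋃ i, (Ms i).s ∧ IsMdl Mu ∧ ∀ i, Le IsMor (Ms i) Mu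

/-- `U` is a `κ`-rich model: every morphism `f : M → U` with `|f| < |M| ≤ κ` extends
to a strong embedding of `M` into `U`. -/
def RichAt (IsMdl : Mdl L W → Prop) (IsMor : Mdl L W → Mdl L W → Set (W × W) → Prop)
    (κ : Cardinal.{u}) (U : Mdl L W) : Prop :=
  IsMdl U ∧ ∀ (M : Mdl L W) (G : Set (W × W)), IsMor M U G → #↥G < #↥M.s → #↥M.s ≤ κ →
    ∃ H, G ⊆ H ∧ StrongEmb IsMor M U H

/-- `U` is rich: `|U|`-rich. -/
def Rich (IsMdl : Mdl L W → Prop) (IsMor : Mdl L W → Mdl L W → Set (W × W) → Prop)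
    (U : Mdl L W) : Prop :=
  RichAt IsMdl IsMor (#↥U.s) U

/-- The class is connected: between any two models there is a morphism. -/
def Connected (IsMdl : Mdl L W → Prop)
    (IsMor : Mdl L W → Mdl L W → Set (W × W) → Prop) : Prop :=
  ∀ M N, IsMdl M → IsMdl N → ∃ G, IsMor M N G

/-- The theory of the rich models: the sentences true in every rich model. -/
def Trich (IsMdl : Mdl L W → Prop)
    (IsMor : Mdl L W → Mdl L W → Set (W × W) → Prop) : L.Theory :=
  {φ | ∀ U : Mdl L W, Rich IsMdl IsMor U → Sentence.Realize (↥U.s) φ}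

/-- The class is full: if every sentence true in a model `M` is true in some rich model,
then some rich model satisfies the whole theory of `M`. -/
def Full (IsMdl : Mdl L W → Prop)
    (IsMor : Mdl L W → Mdl L W → Set (W × W) → Prop) : Prop :=
  ∀ M, IsMdl M →
    (∀ φ : L.Sentence, Sentence.Realize (↥M.s) φ → ∃ U, Rich IsMdl IsMor U ∧ Sentence.Realize (↥U.s) φ) →
    ∃ U, Rich IsMdl IsMor U ∧ ∀ φ : L.Sentence, Sentence.Realize (↥M.s) φ → Sentence.Realize (↥U.s) φ

/-- `M` is a substructure of `N`: `M ⊆ N` and the inclusion is a partial embedding. -/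
def Substr (M N : Mdl L W) : Prop :=
  M.s ⊆ N.s ∧ IsPartialEmbedding M N (idGraph M.s)

/-- `M` is an elementary substructure of `N`. -/
def ElemSubstr (M N : Mdl L W) : Prop :=
  M.s ⊆ N.s ∧ IsElemMap M N (idGraph M.s)

/-- Realization of a formula in an explicitly given structure. -/
def RealizeIn (L : FirstOrder.Language.{u, u}) (N : Type u) (SN : L.Structure N) {α : Type u}
    (φ : L.Formula α) (v : α → N) : Prop :=
  letI := SN
  φ.Realize v

/-- `M` is `κ`-saturated: every type (in finitely many variables) over a parameter set
`A ⊆ M` with `|A| < κ` which is consistent with the theory of `M` with parameters from `A`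
is realized in `M`. -/
def IsSatAt (L : FirstOrder.Language.{u, u}) (κ : Cardinal.{u}) (M : Type u) [L.Structure M] : Prop :=
  ∀ (A : Set M), #↥A < κ →
    ∀ (n : ℕ) (p : Set (L.Formula (Fin n ⊕ ↥A))),
      (∃ (N : Type u) (SN : L.Structure N) (v : ↥A → N) (w : Fin n → N),
        (∀ ψ : L.Formula ↥A, ψ.Realize ((↑) : ↥A → M) ↔ RealizeIn L N SN ψ v) ∧
        ∀ φ ∈ p, RealizeIn L N SN φ (Sum.elim w v)) →
      ∃ a : Fin n → M, ∀ φ ∈ p, φ.Realize (Sum.elim a ((↑) : ↥A → M))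

/-- `M` is saturated: `|M|`-saturated. -/
def IsSat (L : FirstOrder.Language.{u, u}) (M : Type u) [L.Structure M] : Prop :=
  IsSatAt L (#M) M

/-- A theory is model-complete: whenever `M ⊆ N` are models of `T`,
`M` is an elementary substructure of `N`. -/
def IsModelComplete (W : Type u) (T : L.Theory) : Prop :=
  ∀ M N : Mdl L W, Theory.Model (↥M.s) T → Theory.Model (↥N.s) T → Substr M N → ElemSubstr M N

/-!
A morphism `f : U → V` with `|f| < λ` is an elementary map. This is proved by induction on
formulas: at a quantifier, `λ`-richness of `V` extends `f` by one point of `U` (forth), and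
`λ`-richness of `U` applied to `f⁻¹` extends it by one point of `V` (back), keeping it a small
morphism. Elementary maps are closed under unions of chains, and a small elementary map is a
morphism by (K1). So, enumerating `U` and `V` in order type `λ` and alternating forth and back
steps, we obtain a chain of small elementary maps whose union is a bijective elementary map
extending `f`. For the second claim, apply the first to the empty restriction of a morphism.
-/

theorem mk_insert_lt {α : Type u} {lam : Cardinal.{u}} (hlam : ℵ₀ ≤ lam) {s : Set α}
    (hs : #s < lam) (a : α) : #(insert a s : Set α) < lam :=
  mk_insert_le.trans_lt (add_lt_of_lt hlam hs (one_lt_aleph0.trans_le hlam))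

section Transfinite

variable {ι X : Type u}

/-- A stage of a transfinite construction, recorded through the points `p i` added at the steps
`i ∈ I`, so that `#(trace G p I) ≤ #G + 2 * #I` holds by construction rather than by induction. -/
def trace (G : Set X) (p : ι → X × X) (I : Set ι) : Set X :=
  G ∪ (fun i => (p i).1) '' I ∪ (fun i => (p i).2) '' I

variable {G : Set X} {p : ι → X × X}

theorem trace_mono : Monotone (trace G p) := fun _ _ hIJ =>
  union_subset_union (union_subset_union_right _ (image_mono hIJ)) (image_mono hIJ)

theorem subset_trace {I : Set ι} : G ⊆ trace G p I :=
  subset_union_left.trans subset_union_left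

theorem fst_mem_trace {I : Set ι} {i : ι} (hi : i ∈ I) : (p i).1 ∈ trace G p I :=
  Or.inl (Or.inr ⟨i, hi, rfl⟩)

theorem snd_mem_trace {I : Set ι} {i : ι} (hi : i ∈ I) : (p i).2 ∈ trace G p I :=
  Or.inr ⟨i, hi, rfl⟩

theorem mk_trace_lt {lam : Cardinal.{u}} (hlam : ℵ₀ ≤ lam) (hG : #G < lam) {I : Set ι}
    (hI : #I < lam) : #(trace G p I) < lam :=
  (mk_union_le _ _).trans_lt <| add_lt_of_lt hlam
    ((mk_union_le _ _).trans_lt (add_lt_of_lt hlam hG (mk_image_le.trans_lt hI)))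
    (mk_image_le.trans_lt hI)

theorem trace_Iic [LinearOrder ι] (i : ι) :
    trace G p (Iic i) = insert (p i).2 (insert (p i).1 (trace G p (Iio i))) := by
  ext x
  simp only [trace, ← Iio_insert, image_insert_eq, mem_union, mem_insert_iff]
  tauto

theorem trace_Iio_subset_sUnion [LinearOrder ι] (i : ι) :
    trace G p (Iio i) ⊆ ⋃₀ insert G (range fun j : Iio i => trace G p (Iic j.1)) := by
  rintro x ((hx | ⟨j, hj, rfl⟩) | ⟨j, hj, rfl⟩)
  · exact ⟨G, mem_insert _ _, hx⟩
  · exact ⟨_, mem_insert_of_mem _ ⟨⟨j, hj⟩, rfl⟩, fst_mem_trace (mem_Iic.2 le_rfl)⟩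
  · exact ⟨_, mem_insert_of_mem _ ⟨⟨j, hj⟩, rfl⟩, snd_mem_trace (mem_Iic.2 le_rfl)⟩

theorem exists_eq_next_trace_Iio [LinearOrder ι] [WellFoundedLT ι]
    (next : Set X → ι → X × X) :
    ∃ p : ι → X × X, ∀ i, p i = next (trace G p (Iio i)) i := by
  refine ⟨wellFounded_lt.fix fun i rec =>
    next (G ∪ range (fun j : Iio i => (rec j j.2).1) ∪ range (fun j : Iio i => (rec j j.2).2)) i,
    fun i => ?_⟩
  rw [wellFounded_lt.fix_eq]
  simp only [trace, image_eq_range]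

theorem exists_pairs_of_step [LinearOrder ι] [WellFoundedLT ι] {lam : Cardinal.{u}}
    (hlam : ℵ₀ ≤ lam) (hι : ∀ i : ι, #(Iio i) < lam) {E : Set X → Prop}
    (hE : ∀ S : Set (Set X), S.Nonempty → DirectedOn (· ⊆ ·) S → (∀ A ∈ S, E A) →
      ∀ A ⊆ ⋃₀ S, E A)
    {Q : ι → X × X → Prop}
    (step : ∀ A, E A → #A < lam → ∀ i, ∃ q, Q i q ∧ E (insert q.2 (insert q.1 A)))
    (hG : E G) (hGlam : #G < lam) :
    ∃ p : ι → X × X, ∀ i, Q i (p i) ∧ E (trace G p (Iic i)) := by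
  have step' : ∀ (A : Set X) (i : ι),
      ∃ q, E A → #A < lam → Q i q ∧ E (insert q.2 (insert q.1 A)) := by
    intro A i
    by_cases hA : E A ∧ #A < lam
    · obtain ⟨q, hq⟩ := step A hA.1 hA.2 i
      exact ⟨q, fun _ _ => hq⟩
    · obtain ⟨q, -⟩ := step G hG hGlam i
      exact ⟨q, fun h h' => (hA ⟨h, h'⟩).elim⟩
  choose next hnext using step'
  obtain ⟨p, hp⟩ := exists_eq_next_trace_Iio (G := G) next
  refine ⟨p, fun i => ?_⟩
  induction i using WellFoundedLT.induction with
  | _ i ih =>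
    have hmono : Monotone fun j : Iio i => trace G p (Iic j.1) :=
      fun _ _ hjk => trace_mono (Iic_subset_Iic.2 hjk)
    have hchain : IsChain (· ⊆ ·) (insert G (range fun j : Iio i => trace G p (Iic j.1))) :=
      hmono.isChain_range.insert <| forall_mem_range.2 fun _ _ => Or.inl subset_trace
    have hpast : E (trace G p (Iio i)) := by
      refine hE _ (insert_nonempty _ _) hchain.directedOn ?_ _ (trace_Iio_subset_sUnion i)
      rintro A (rfl | ⟨j, rfl⟩)
      exacts [hG, (ih j j.2).2]
    rw [trace_Iic, hp i]
    exact hnext _ i hpast (mk_trace_lt hlam hGlam (hι i))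

end Transfinite

theorem exists_extension_of_forth_back {α β : Type u} {lam : Cardinal.{u}} (hlam : ℵ₀ ≤ lam)
    {s : Set α} {t : Set β} (hs : #s = lam) (ht : #t = lam) {E : Set (α × β) → Prop}
    (hE : ∀ S : Set (Set (α × β)), S.Nonempty → DirectedOn (· ⊆ ·) S → (∀ A ∈ S, E A) →
      ∀ A ⊆ ⋃₀ S, E A)
    (forth : ∀ A, E A → #A < lam → ∀ a ∈ s, ∃ b, E (insert (a, b) A))
    (back : ∀ A, E A → #A < lam → ∀ b ∈ t, ∃ a, E (insert (a, b) A))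
    {G : Set (α × β)} (hG : E G) (hGlam : #G < lam) :
    ∃ H, G ⊆ H ∧ E H ∧ (∀ a ∈ s, ∃ b, (a, b) ∈ H) ∧ ∀ b ∈ t, ∃ a, (a, b) ∈ H := by
  have hι : #lam.ord.ToType = lam := mk_ord_toType lam
  have : Nonempty lam.ord.ToType :=
    mk_ne_zero_iff.1 (by rw [hι]; exact (aleph0_pos.trans_le hlam).ne')
  obtain ⟨eA⟩ : Nonempty (lam.ord.ToType ≃ s) := Cardinal.eq.1 (hι.trans hs.symm)
  obtain ⟨eB⟩ : Nonempty (lam.ord.ToType ≃ t) := Cardinal.eq.1 (hι.trans ht.symm)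
  have step : ∀ A, E A → #A < lam → ∀ i, ∃ q : (α × β) × (α × β),
      (q.1.1 = eA i ∧ q.2.2 = eB i) ∧ E (insert q.2 (insert q.1 A)) := by
    intro A hA hAlam i
    obtain ⟨b, hb⟩ := forth A hA hAlam _ (eA i).2
    obtain ⟨a, ha⟩ := back _ hb (mk_insert_lt hlam hAlam _) _ (eB i).2
    exact ⟨((eA i, b), (a, eB i)), ⟨rfl, rfl⟩, ha⟩
  obtain ⟨p, hp⟩ := exists_pairs_of_step hlam (fun i => by simpa using mk_Iio_lt i) hE step hG hGlam
  have hmono : Monotone fun i => trace G p (Iic i) :=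
    fun _ _ hij => trace_mono (Iic_subset_Iic.2 hij)
  refine ⟨⋃ i, trace G p (Iic i),
    subset_trace.trans (subset_iUnion (fun i => trace G p (Iic i)) (Classical.arbitrary _)),
    hE _ (range_nonempty _) (directedOn_range.2 hmono.directed_le)
      (forall_mem_range.2 fun i => (hp i).2) _ (sUnion_range _).symm.subset, ?_, ?_⟩
  · intro a ha
    obtain ⟨i, hi⟩ := eA.surjective ⟨a, ha⟩
    refine ⟨(p i).1.2, mem_iUnion.2 ⟨i, ?_⟩⟩
    convert fst_mem_trace (G := G) (p := p) (mem_Iic.2 le_rfl)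
    rw [(hp i).1.1, hi]
  · intro b hb
    obtain ⟨i, hi⟩ := eB.surjective ⟨b, hb⟩
    refine ⟨(p i).2.1, mem_iUnion.2 ⟨i, ?_⟩⟩
    convert snd_mem_trace (G := G) (p := p) (mem_Iic.2 le_rfl)
    rw [(hp i).1.2, hi]

theorem _root_.FirstOrder.Language.BoundedFormula.IsQF.toFormula {α : Type*} {k : ℕ}
    {φ : L.BoundedFormula α k} (h : φ.IsQF) : φ.toFormula.IsQF := by
  induction h with
  | falsum => exact .falsum
  | of_isAtomic h =>
    cases h with
    | equal t₁ t₂ => exact (BoundedFormula.IsAtomic.equal _ _).isQF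
    | rel R ts => exact (BoundedFormula.IsAtomic.rel _ _).isQF
  | imp _ _ ih₁ ih₂ => exact ih₁.imp ih₂

section Maps

variable {M N : Mdl L W} {G : Set (W × W)}

theorem IsPartialEmbedding.realize_iff_of_isQF (hG : IsPartialEmbedding M N G) {n k : ℕ}
    {φ : L.BoundedFormula (Fin n) k} (hφ : φ.IsQF) {v : Fin n → M.s} {xs : Fin k → M.s}
    {w : Fin n → N.s} {ys : Fin k → N.s} (hvw : ∀ i, ((v i : W), (w i : W)) ∈ G)
    (hxy : ∀ i, ((xs i : W), (ys i : W)) ∈ G) :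
    φ.Realize v xs ↔ φ.Realize w ys := by
  let ψ : L.Formula (Fin (n + k)) := φ.toFormula.relabel finSumFinEquiv
  have realize_ψ : ∀ {P : Type u} [L.Structure P] (v' : Fin n → P) (xs' : Fin k → P),
      ψ.Realize (Sum.elim v' xs' ∘ finSumFinEquiv.symm) ↔ φ.Realize v' xs' := by
    intro P _ v' xs'
    rw [Formula.realize_relabel, Function.comp_assoc, Equiv.symm_comp_self, Function.comp_id,
      BoundedFormula.realize_toFormula, Sum.elim_comp_inl, Sum.elim_comp_inr]
  rw [← realize_ψ, ← realize_ψ]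
  refine hG.2 _ ψ (hφ.toFormula.relabel _) _ _ fun i => ?_
  rcases h : finSumFinEquiv.symm i with j | j <;> simp [h, hvw, hxy]

theorem IsElemMap.isPartialEmbedding (hG : IsElemMap M N G) : IsPartialEmbedding M N G :=
  ⟨hG.1, fun n φ _ => hG.2 n φ⟩

theorem isElemMap_of_subset_sUnion {S : Set (Set (W × W))} (hne : S.Nonempty)
    (hS : DirectedOn (· ⊆ ·) S) (hSE : ∀ A ∈ S, IsElemMap M N A) (hG : G ⊆ ⋃₀ S) :
    IsElemMap M N G := by
  refine ⟨fun p hp => ?_, fun n φ x y hxy => ?_⟩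
  · obtain ⟨A, hA, hpA⟩ := hG hp
    exact (hSE A hA).1 p hpA
  · obtain ⟨A, hA, hxyA⟩ := hS.exists_mem_subset_of_finite_of_subset_sUnion hne
      (finite_range fun i => ((x i : W), (y i : W))) (range_subset_iff.2 fun i => hG (hxy i))
    exact (hSE A hA).2 n φ x y fun i => hxyA (mem_range_self i)

end Maps

theorem swapGraph_swapGraph (G : Set (W × W)) : swapGraph (swapGraph G) = G := rfl

theorem swapGraph_insert (a b : W) (G : Set (W × W)) :
    swapGraph (insert (a, b) G) = insert (b, a) (swapGraph G) := by
  ext ⟨x, y⟩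
  simp only [swapGraph, mem_ofPred_eq, mem_insert_iff, Prod.mk.injEq, and_comm]

theorem mk_swapGraph (G : Set (W × W)) : #(swapGraph G) = #G :=
  mk_congr ⟨fun p => ⟨p.1.swap, p.2⟩, fun p => ⟨p.1.swap, p.2⟩, fun _ => rfl, fun _ => rfl⟩

theorem forall_snoc_mem_insert {s t : Set W} {G : Set (W × W)} {k : ℕ} {xs : Fin k → s}
    {ys : Fin k → t} (hxy : ∀ i, ((xs i : W), (ys i : W)) ∈ G) (a : s) (b : t) :
    ∀ i, (((Fin.snoc xs a : Fin (k + 1) → s) i : W), ((Fin.snoc ys b : Fin (k + 1) → t) i : W)) ∈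
      insert ((a : W), (b : W)) G :=
  Fin.lastCases (by simp) fun j => by simpa using Or.inr (hxy j)

section Rich

variable {K : IAC L W} {lam : Cardinal.{u}} {U V : Mdl L W} {G : Set (W × W)}

theorem RichAt.exists_insert_isMor_of_mem_left (hV : RichAt K.IsMdl K.IsMor lam V)
    (hU : #U.s ≤ lam) (hG : K.IsMor U V G) (hGU : #G < #U.s) {a : W} (ha : a ∈ U.s) :
    ∃ b ∈ V.s, K.IsMor U V (insert (a, b) G) := by
  obtain ⟨H, hGH, hH, htotal⟩ := hV.2 U G hG hGU hU
  obtain ⟨b, hab⟩ := htotal a ha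
  exact ⟨b, ((K.mor_pe U V H hH).1 _ hab).2, K.restr U V _ H hH (insert_subset hab hGH)⟩

theorem RichAt.exists_insert_isMor_of_mem_right (hU : RichAt K.IsMdl K.IsMor lam U)
    (hV : #V.s ≤ lam) (hG : K.IsMor U V G) (hGV : #G < #V.s) {b : W} (hb : b ∈ V.s) :
    ∃ a ∈ U.s, K.IsMor U V (insert (a, b) G) := by
  obtain ⟨a, ha, hba⟩ :=
    hU.exists_insert_isMor_of_mem_left hV (K.k2 U V G hG) ((mk_swapGraph G).trans_lt hGV) hb
  have hab := K.k2 V U _ hba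
  rw [swapGraph_insert, swapGraph_swapGraph] at hab
  exact ⟨a, ha, hab⟩

theorem realize_iff_of_isMor (hlam : ℵ₀ ≤ lam) (hU : RichAt K.IsMdl K.IsMor lam U)
    (hV : RichAt K.IsMdl K.IsMor lam V) (hcU : #U.s = lam) (hcV : #V.s = lam) {n k : ℕ}
    (φ : L.BoundedFormula (Fin n) k) (hG : K.IsMor U V G) (hGlam : #G < lam)
    {v : Fin n → U.s} {xs : Fin k → U.s} {w : Fin n → V.s} {ys : Fin k → V.s}
    (hvw : ∀ i, ((v i : W), (w i : W)) ∈ G)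
    (hxy : ∀ i, ((xs i : W), (ys i : W)) ∈ G) :
    φ.Realize v xs ↔ φ.Realize w ys := by
  induction φ generalizing G with
  | falsum => exact Iff.rfl
  | equal t₁ t₂ =>
    exact (K.mor_pe U V G hG).realize_iff_of_isQF (BoundedFormula.IsAtomic.equal t₁ t₂).isQF hvw hxy
  | rel R ts =>
    exact (K.mor_pe U V G hG).realize_iff_of_isQF (BoundedFormula.IsAtomic.rel R ts).isQF hvw hxy
  | imp φ ψ ihφ ihψ => exact imp_congr (ihφ hG hGlam hvw hxy) (ihψ hG hGlam hvw hxy)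
  | all φ ih =>
    simp only [BoundedFormula.realize_all]
    constructor
    · intro h b
      obtain ⟨a, ha, hGa⟩ := hU.exists_insert_isMor_of_mem_right hcV.le hG (hcV ▸ hGlam) b.2
      exact (ih hGa (mk_insert_lt hlam hGlam _) (fun i => mem_insert_of_mem _ (hvw i))
        (forall_snoc_mem_insert hxy ⟨a, ha⟩ b)).1 (h ⟨a, ha⟩)
    · intro h a
      obtain ⟨b, hb, hGb⟩ := hV.exists_insert_isMor_of_mem_left hcU.le hG (hcU ▸ hGlam) a.2
      exact (ih hGb (mk_insert_lt hlam hGlam _) (fun i => mem_insert_of_mem _ (hvw i))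
        (forall_snoc_mem_insert hxy a ⟨b, hb⟩)).2 (h ⟨b, hb⟩)

theorem isElemMap_of_isMor (hlam : ℵ₀ ≤ lam) (hU : RichAt K.IsMdl K.IsMor lam U)
    (hV : RichAt K.IsMdl K.IsMor lam V) (hcU : #U.s = lam) (hcV : #V.s = lam)
    (hG : K.IsMor U V G) (hGlam : #G < lam) :
    IsElemMap U V G :=
  ⟨(K.mor_pe U V G hG).1, fun _ φ _ _ hxy =>
    realize_iff_of_isMor hlam hU hV hcU hcV φ hG hGlam hxy finZeroElim⟩

end Rich

/-- Uniqueness, second part: if `U`, `V` are `λ`-rich of cardinality `λ`,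
every morphism `f : U → V` with `|f| < λ` extends to an isomorphism; in particular any two
rich models of the same cardinality in the same connected component are isomorphic. -/
theorem statement_6 (K : IAC L W) (lam : Cardinal.{u}) (hlam : ℵ₀ ≤ lam)
    (U V : Mdl L W) (hU : RichAt K.IsMdl K.IsMor lam U)
    (hV : RichAt K.IsMdl K.IsMor lam V)
    (hcU : #↥U.s = lam) (hcV : #↥V.s = lam) :
    (∀ G : Set (W × W), K.IsMor U V G → #↥G < lam →
      ∃ H, G ⊆ H ∧ IsPartialEmbedding U V H ∧
        (∀ a ∈ U.s, ∃ b, (a, b) ∈ H) ∧ (∀ b ∈ V.s, ∃ a, (a, b) ∈ H)) ∧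
    ((∃ G, K.IsMor U V G) →
      ∃ H, IsPartialEmbedding U V H ∧
        (∀ a ∈ U.s, ∃ b, (a, b) ∈ H) ∧ (∀ b ∈ V.s, ∃ a, (a, b) ∈ H)) := by
  have forth : ∀ A, IsElemMap U V A → #A < lam →
      ∀ a ∈ U.s, ∃ b, IsElemMap U V (insert (a, b) A) := by
    intro A hA hAlam a ha
    obtain ⟨b, -, hb⟩ :=
      hV.exists_insert_isMor_of_mem_left hcU.le (K.k1 U V A hU.1 hV.1 hA) (hcU ▸ hAlam) ha
    exact ⟨b, isElemMap_of_isMor hlam hU hV hcU hcV hb (mk_insert_lt hlam hAlam _)⟩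
  have back : ∀ A, IsElemMap U V A → #A < lam →
      ∀ b ∈ V.s, ∃ a, IsElemMap U V (insert (a, b) A) := by
    intro A hA hAlam b hb
    obtain ⟨a, -, ha⟩ :=
      hU.exists_insert_isMor_of_mem_right hcV.le (K.k1 U V A hU.1 hV.1 hA) (hcV ▸ hAlam) hb
    exact ⟨a, isElemMap_of_isMor hlam hU hV hcU hcV ha (mk_insert_lt hlam hAlam _)⟩
  have extend : ∀ G : Set (W × W), K.IsMor U V G → #G < lam →
      ∃ H, G ⊆ H ∧ IsPartialEmbedding U V H ∧
        (∀ a ∈ U.s, ∃ b, (a, b) ∈ H) ∧ (∀ b ∈ V.s, ∃ a, (a, b) ∈ H) := by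
    intro G hG hGlam
    obtain ⟨H, hGH, hH, htotal, hsurj⟩ := exists_extension_of_forth_back hlam hcU hcV
      (fun _ hne hS hSE _ hA => isElemMap_of_subset_sUnion hne hS hSE hA) forth back
      (isElemMap_of_isMor hlam hU hV hcU hcV hG hGlam) hGlam
    exact ⟨H, hGH, hH.isPartialEmbedding, htotal, hsurj⟩
  refine ⟨extend, fun ⟨G, hG⟩ => ?_⟩
  obtain ⟨H, -, hH⟩ := extend ∅ (K.restr U V ∅ G hG (empty_subset G))
    (by simpa using aleph0_pos.trans_le hlam)
  exact ⟨H, hH⟩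

end Amalg
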